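/- arXiv:1701.06481 — 3 statements merged into one kernel-verified Lean document; each statement's English description precedes it below -/
import Mathlib

section
/- For LRU and FIFO caches of associativity A and a disjoint-memory attacker (the attacker's blocks are disjoint from the victim's blocks), the maximum number of knowledge sets any probing strategy can produce on any set of possible states is at most A+1. -/
/-- LRU update: accessed block gets age 0; blocks younger than it (or all cached
blocks on a miss) age by one; other blocks are unchanged. -/
def updLRU (A : ℕ) (b : ℕ) (c : ℕ → ℕ) : ℕ → ℕ := fun b' =>
  if b' = b then 0 else if c b' < min (c b) A then c b' + 1 else c b'

/-- FIFO update: hits leave the state unchanged; on a miss the accessed block gets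
age 0 and cached blocks age by one (the oldest is evicted). -/
def updFIFO (A : ℕ) (b : ℕ) (c : ℕ → ℕ) : ℕ → ℕ :=
  if c b < A then c
  else fun b' => if b' = b then 0 else if c b' < A then c b' + 1 else c b'

/-- Generic permutation-policy update with permutation function `P`:
on a hit, ages of cached blocks are permuted by `P (c b)`; on a miss the accessed
block gets age 0 and cached blocks age by one. -/
def updPerm (P : ℕ → ℕ → ℕ) (A : ℕ) (b : ℕ) (c : ℕ → ℕ) : ℕ → ℕ :=
  if c b < A then fun b' => if c b' < A then P (c b) (c b') else c b'
  else fun b' => if b' = b then 0 else if c b' < A then c b' + 1 else c b'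

/-- The PLRU permutation function. -/
def piPLRU (a a' : ℕ) : ℕ :=
  if _h1 : a' = a then 0
  else if _h2 : a % 2 = 0 ∧ a' % 2 = 1 then a'
  else if _h3 : a % 2 = 1 ∧ a' % 2 = 0 then a' + 1
  else 2 * piPLRU (a / 2) (a' / 2)
termination_by a + a'
decreasing_by omega

/-- The PLRU update. -/
def updPLRU (A : ℕ) : ℕ → (ℕ → ℕ) → (ℕ → ℕ) := updPerm piPLRU A

/-- Sequential application of the update function along a trace of accesses. -/
def updTrace (upd : ℕ → (ℕ → ℕ) → (ℕ → ℕ)) : List ℕ → (ℕ → ℕ) → (ℕ → ℕ)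
  | [], c => c
  | b :: t, c => updTrace upd t (upd b c)

/-- States reachable from `c₀` using traces over the set of blocks `B`. -/
def Reach (upd : ℕ → (ℕ → ℕ) → (ℕ → ℕ)) (B : Set ℕ) (c₀ : ℕ → ℕ) : Set (ℕ → ℕ) :=
  {c | ∃ t : List ℕ, (∀ b ∈ t, b ∈ B) ∧ updTrace upd t c₀ = c}

/-- Cache state invariant: ages are at most `A`, and distinct blocks have distinct
ages unless both have age `A` (uncached). -/
def CacheInv (A : ℕ) (c : ℕ → ℕ) : Prop :=
  (∀ b, c b ≤ A) ∧ ∀ b b', c b < A → c b = c b' → b = b'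

/-- `c` is filled with `B`: the blocks of `B` occupy the youngest ages
`{0, …, min (A, |B|−1)}`, and all remaining cache lines are occupied
(by attacker blocks). -/
def FilledWith (A : ℕ) (c : ℕ → ℕ) (B : Finset ℕ) : Prop :=
  CacheInv A c ∧ (∀ a, a < A → ∃ b, c b = a) ∧
    c '' ↑B = Set.Iio (min (A + 1) B.card)

/-- `c` is empty w.r.t. `B`: no block of `B` is cached, and all cache lines are
occupied (by attacker blocks). -/
def EmptyWith (A : ℕ) (c : ℕ → ℕ) (B : Finset ℕ) : Prop :=
  CacheInv A c ∧ (∀ b ∈ B, c b = A) ∧ (∀ a, a < A → ∃ b, c b = a)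

/-- Run a Mealy machine along the inputs of a probe. -/
def mrun {S I O : Type*} (upd : I → S → S) : List (I × O) → S → S
  | [], s => s
  | io :: p, s => mrun upd p (upd io.1 s)

/-- A state `s` is coherent with a probe if the machine, started in `s`,
produces the probe's observations on the probe's inputs. -/
def Coherent {S I O : Type*} (upd : I → S → S) (view : I → S → O) :
    List (I × O) → S → Prop
  | [], _ => True
  | io :: p, s => view io.1 s = io.2 ∧ Coherent upd view p (upd io.1 s)

/-- Knowledge set of a probe: the possible initial states coherent with it. -/
def Kset {S I O : Type*} (upd : I → S → S) (view : I → S → O) (Sv : Set S)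
    (p : List (I × O)) : Set S :=
  {s ∈ Sv | Coherent upd view p s}

/-- Final knowledge set of a probe: states the machine may be in afterwards. -/
def FKset {S I O : Type*} (upd : I → S → S) (view : I → S → O) (Sv : Set S)
    (p : List (I × O)) : Set S :=
  mrun upd p '' Kset upd view Sv p

/-- The probe's inputs follow the probing strategy `att`. -/
def Follows {I O : Type*} (att : List O → I) (p : List (I × O)) : Prop :=
  ∀ i (h : i < p.length), (p.get ⟨i, h⟩).1 = att ((p.map Prod.snd).take i)

/-- A probe of `att` is depleted if no realizable extension of it following `att`
refines its knowledge set. -/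
def Depleted {S I O : Type*} (upd : I → S → S) (view : I → S → O) (Sv : Set S)
    (att : List O → I) (p : List (I × O)) : Prop :=
  Follows att p ∧ ∀ q, Follows att q → p <+: q → (Kset upd view Sv q).Nonempty →
    Kset upd view Sv q = Kset upd view Sv p

/-- The knowledge sets produced by the depleted probes of strategy `att`. -/
def KnowledgeSets {S I O : Type*} (upd : I → S → S) (view : I → S → O)
    (Sv : Set S) (att : List O → I) : Set (Set S) :=
  {K | ∃ p, Depleted upd view Sv att p ∧ K = Kset upd view Sv p ∧ K.Nonempty}

/-- Cache observation: `true` for a hit, `false` for a miss. -/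
def viewCache (A : ℕ) (b : ℕ) (c : ℕ → ℕ) : Bool := decide (c b < A)

section Aux

/-- Attacker-visible invariant: attacker blocks' ages are determined by a shift
`k ≤ A` of their initial ages, and cached non-attacker blocks have age `< k`. -/
def AttState (A : ℕ) (Ba : Set ℕ) (c₀ c : ℕ → ℕ) : Prop :=
  ∃ k, k ≤ A ∧ (∀ b ∈ Ba, c b = min (c₀ b + k) A) ∧
    (∀ x, x ∉ Ba → c x < A → c x < k)

lemma attState_step (A : ℕ) (Ba : Set ℕ) (c₀ : ℕ → ℕ)
    (upd : ℕ → (ℕ → ℕ) → (ℕ → ℕ)) (hupd : upd = updLRU A ∨ upd = updFIFO A)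
    (b : ℕ) (hb : b ∉ Ba) (c : ℕ → ℕ) (h : AttState A Ba c₀ c) :
    AttState A Ba c₀ (upd b c) := by
  obtain ⟨k, hkA, hBa, hV⟩ := h
  by_cases hhit : c b < A
  · -- hit
    have hbk : c b < k := hV b hb hhit
    refine ⟨k, hkA, ?_, ?_⟩
    · intro x hx
      have hxb : ¬ x = b := fun e => hb (e ▸ hx)
      have hcx := hBa x hx
      rcases hupd with rfl | rfl
      · simp only [updLRU]; split_ifs <;> omega
      · simp only [updFIFO, if_pos hhit]; omega
    · intro x hxBa
      rcases Nat.lt_or_ge (c x) A with hlt | hge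
      · have hxk := hV x hxBa hlt
        rcases hupd with rfl | rfl
        · simp only [updLRU]; split_ifs <;> omega
        · simp only [updFIFO, if_pos hhit]; omega
      · rcases hupd with rfl | rfl
        · simp only [updLRU]; split_ifs <;> omega
        · simp only [updFIFO, if_pos hhit]; omega
  · -- miss
    refine ⟨min (k + 1) A, Nat.min_le_right _ _, ?_, ?_⟩
    · intro x hx
      have hxb : ¬ x = b := fun e => hb (e ▸ hx)
      have hcx := hBa x hx
      rcases hupd with rfl | rfl
      · simp only [updLRU]; split_ifs <;> omega
      · simp only [updFIFO, if_neg hhit]; split_ifs <;> omega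
    · intro x hxBa
      rcases Nat.lt_or_ge (c x) A with hlt | hge
      · have hxk := hV x hxBa hlt
        rcases hupd with rfl | rfl
        · simp only [updLRU]; split_ifs <;> omega
        · simp only [updFIFO, if_neg hhit]; split_ifs <;> omega
      · rcases hupd with rfl | rfl
        · simp only [updLRU]; split_ifs <;> omega
        · simp only [updFIFO, if_neg hhit]; split_ifs <;> omega

lemma updTrace_attState (A : ℕ) (Ba Bv : Set ℕ) (hdisj : Disjoint Ba Bv)
    (c₀ : ℕ → ℕ) (upd : ℕ → (ℕ → ℕ) → (ℕ → ℕ))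
    (hupd : upd = updLRU A ∨ upd = updFIFO A) :
    ∀ (t : List ℕ) (c : ℕ → ℕ), (∀ b ∈ t, b ∈ Bv) → AttState A Ba c₀ c →
      AttState A Ba c₀ (updTrace upd t c) := by
  intro t
  induction t with
  | nil => intro c _ hc; exact hc
  | cons b t ih =>
    intro c hmem hc
    exact ih _ (fun x hx => hmem x (List.mem_cons_of_mem _ hx))
      (attState_step A Ba c₀ upd hupd b
        (fun hBa => Set.disjoint_left.mp hdisj hBa (hmem b List.mem_cons_self)) c hc)

lemma reach_attState (A : ℕ) (Ba Bv : Set ℕ) (hdisj : Disjoint Ba Bv)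
    (c₀ : ℕ → ℕ) (hinv : CacheInv A c₀) (hfill : ∀ a, a < A → ∃ b ∈ Ba, c₀ b = a)
    (upd : ℕ → (ℕ → ℕ) → (ℕ → ℕ)) (hupd : upd = updLRU A ∨ upd = updFIFO A)
    (c : ℕ → ℕ) (hc : c ∈ Reach upd Bv c₀) : AttState A Ba c₀ c := by
  obtain ⟨t, ht, rfl⟩ := hc
  refine updTrace_attState A Ba Bv hdisj c₀ upd hupd t c₀ ht ⟨0, Nat.zero_le _, ?_, ?_⟩
  · intro x _; have := hinv.1 x; omega
  · intro x hx hxA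
    obtain ⟨y, hy, hyx⟩ := hfill (c₀ x) hxA
    exact absurd (hinv.2 x y hxA hyx.symm ▸ hy) hx

lemma upd_agree (A : ℕ) (Ba : Set ℕ) (upd : ℕ → (ℕ → ℕ) → (ℕ → ℕ))
    (hupd : upd = updLRU A ∨ upd = updFIFO A) (b : ℕ) (hb : b ∈ Ba)
    (c c' : ℕ → ℕ) (h : ∀ x ∈ Ba, c x = c' x) :
    ∀ x ∈ Ba, upd b c x = upd b c' x := by
  intro x hx
  have hcb := h b hb
  have hcx := h x hx
  rcases hupd with rfl | rfl
  · simp only [updLRU]; split_ifs <;> omega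
  · simp only [updFIFO]
    by_cases hbA : c b < A
    · have hbA' : c' b < A := by omega
      simp only [if_pos hbA, if_pos hbA']; exact hcx
    · have hbA' : ¬ c' b < A := by omega
      simp only [if_neg hbA, if_neg hbA']; split_ifs <;> omega

lemma coherent_transfer (A : ℕ) (Ba : Set ℕ) (upd : ℕ → (ℕ → ℕ) → (ℕ → ℕ))
    (hupd : upd = updLRU A ∨ upd = updFIFO A) :
    ∀ (p : List (ℕ × Bool)) (c c' : ℕ → ℕ), (∀ io ∈ p, io.1 ∈ Ba) →
      (∀ x ∈ Ba, c x = c' x) →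
      Coherent upd (viewCache A) p c → Coherent upd (viewCache A) p c' := by
  intro p
  induction p with
  | nil => intro c c' _ _ _; trivial
  | cons io p ih =>
    intro c c' hmem hag hc
    obtain ⟨hv, hc2⟩ := hc
    have hb : io.1 ∈ Ba := hmem io List.mem_cons_self
    refine ⟨?_, ih _ _ (fun x hx => hmem x (List.mem_cons_of_mem _ hx))
      (upd_agree A Ba upd hupd io.1 hb c c' hag) hc2⟩
    rw [← hv]; simp [viewCache, hag io.1 hb]

lemma follows_tail {I O : Type*} (att : List O → I) (io : I × O)
    (p : List (I × O)) (h : Follows att (io :: p)) :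
    Follows (fun os => att (io.2 :: os)) p := by
  intro i hi
  have := h (i + 1) (by simpa using Nat.succ_lt_succ hi)
  simpa using this

lemma follows_mem {O : Type*} {Ba : Set ℕ} {att : List O → ℕ}
    (hatt : ∀ os, att os ∈ Ba) {p : List (ℕ × O)} (hp : Follows att p) :
    ∀ io ∈ p, io.1 ∈ Ba := by
  intro io hio
  obtain ⟨i, rfl⟩ := List.mem_iff_get.mp hio
  rw [hp i i.isLt]
  exact hatt _

lemma coherent_prefix {S I O : Type*} (upd : I → S → S) (view : I → S → O) :
    ∀ (p q : List (I × O)) (att : List O → I) (s : S), Follows att p →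
      Follows att q → Coherent upd view p s → Coherent upd view q s →
      p <+: q ∨ q <+: p := by
  intro p
  induction p with
  | nil => intro q att s _ _ _ _; exact Or.inl (List.nil_prefix)
  | cons a p ih =>
    intro q att s hp hq hcp hcq
    cases q with
    | nil => exact Or.inr (List.nil_prefix)
    | cons b q =>
      have ha : a.1 = att [] := by simpa using hp 0 (by simp)
      have hb : b.1 = att [] := by simpa using hq 0 (by simp)
      have h1 : a.1 = b.1 := ha.trans hb.symm
      obtain ⟨ha2, hcp'⟩ := hcp
      obtain ⟨hb2, hcq'⟩ := hcq
      have h2 : a.2 = b.2 := by rw [← ha2, ← hb2, h1]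
      have hab : a = b := Prod.ext h1 h2
      subst hab
      rcases ih q (fun os => att (a.2 :: os)) (upd a.1 s)
          (follows_tail att a p hp) (follows_tail att a q hq) hcp' hcq' with h | h
      · exact Or.inl (List.cons_prefix_cons.mpr ⟨rfl, h⟩)
      · exact Or.inr (List.cons_prefix_cons.mpr ⟨rfl, h⟩)

end Aux

/-- For LRU and FIFO caches of associativity `A` and a disjoint-memory attacker
(whose blocks `Ba` are disjoint from the victim's blocks `Bv`), any probing
strategy using only blocks from `Ba` produces at most `A+1` knowledge sets on the
set of states reachable by the victim from an attacker-filled initial state. -/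
theorem disjoint_attacker_extraction_le (A : ℕ) (Ba Bv : Set ℕ)
    (hdisj : Disjoint Ba Bv) (c₀ : ℕ → ℕ) (hinv : CacheInv A c₀)
    (hfill : ∀ a, a < A → ∃ b ∈ Ba, c₀ b = a) (hvempty : ∀ b ∈ Bv, c₀ b = A)
    (att : List Bool → ℕ) (hatt : ∀ os, att os ∈ Ba)
    (upd : ℕ → (ℕ → ℕ) → (ℕ → ℕ)) (hupd : upd = updLRU A ∨ upd = updFIFO A) :
    (KnowledgeSets upd (viewCache A) (Reach upd Bv c₀) att).ncard ≤ A + 1 := by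
  classical
  set Sv := Reach upd Bv c₀ with hSv
  set KS := KnowledgeSets upd (viewCache A) Sv att with hKS
  set P : Set (ℕ → ℕ) → ℕ → Prop := fun K k =>
    k ≤ A ∧ ∃ c ∈ K, ∀ b ∈ Ba, c b = min (c₀ b + k) A with hP
  have hex : ∀ K ∈ KS, ∃ k, P K k := by
    rintro K ⟨p, hdep, rfl, hne⟩
    obtain ⟨c, hc⟩ := hne
    obtain ⟨k, hkA, hBa, -⟩ :=
      reach_attState A Ba Bv hdisj c₀ hinv hfill upd hupd c hc.1
    exact ⟨k, hkA, c, hc, hBa⟩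
  set f : Set (ℕ → ℕ) → ℕ := fun K => if h : ∃ k, P K k then h.choose else 0 with hf
  have hspec : ∀ K ∈ KS, P K (f K) := by
    intro K hK
    have h := hex K hK
    simp only [hf, dif_pos h]
    exact h.choose_spec
  have hcard : KS.ncard ≤ (↑(Finset.range (A + 1)) : Set ℕ).ncard := by
    apply Set.ncard_le_ncard_of_injOn f
    · intro K hK
      have := (hspec K hK).1
      simp only [Finset.coe_range, Set.mem_Iio]
      omega
    · intro K1 hK1 K2 hK2 hfeq
      obtain ⟨p1, hdep1, hKp1, hne1⟩ := hK1
      obtain ⟨p2, hdep2, hKp2, hne2⟩ := hK2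
      obtain ⟨hk1A, c1, hc1, hform1⟩ := hspec K1 ⟨p1, hdep1, hKp1, hne1⟩
      obtain ⟨hk2A, c2, hc2, hform2⟩ := hspec K2 ⟨p2, hdep2, hKp2, hne2⟩
      rw [hKp1] at hc1
      rw [hKp2] at hc2
      have hag : ∀ x ∈ Ba, c2 x = c1 x := fun x hx => by
        rw [hform2 x hx, hform1 x hx, hfeq]
      have hc1p2 : c1 ∈ Kset upd (viewCache A) Sv p2 :=
        ⟨hc1.1, coherent_transfer A Ba upd hupd p2 c2 c1
          (follows_mem hatt hdep2.1) hag hc2.2⟩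
      rcases coherent_prefix upd (viewCache A) p1 p2 att c1 hdep1.1 hdep2.1
          hc1.2 hc1p2.2 with h | h
      · have := hdep1.2 p2 hdep2.1 h ⟨c1, hc1p2⟩
        rw [hKp1, hKp2, this]
      · have := hdep2.2 p1 hdep1.1 h ⟨c1, hc1⟩
        rw [hKp1, hKp2, ← this]
  rw [Set.ncard_coe_finset, Finset.card_range] at hcard
  exact hcard
end

section
/- For an LRU cache, if a set of cache states C has n deterministic ages (there exist blocks a₀,...,a_{n−1} with c(aᵢ) = i for every c ∈ C), then after accessing any block aⱼ from this list, the updated set upd_{aⱼ}(C) still has n deterministic ages (witnessed by the reordered list aⱼ, a₀, ..., a_{j−1}, a_{j+1}, ..., a_{n−1}). -/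
def moveToFront (a : ℕ → ℕ) (j i : ℕ) : ℕ :=
  if i = 0 then a j else if i ≤ j then a (i - 1) else a i

section updLRU

variable {A b b' : ℕ} {c : ℕ → ℕ}

@[simp]
theorem updLRU_apply_self : updLRU A b c b = 0 := if_pos rfl

theorem updLRU_apply_of_lt (hb : c b ≤ A) (h : c b' < c b) :
    updLRU A b c b' = c b' + 1 := by
  have hne : b' ≠ b := by rintro rfl; exact h.false
  simp [updLRU, hne, hb, h]

theorem updLRU_apply_of_gt (h : c b < c b') : updLRU A b c b' = c b' := by
  have hne : b' ≠ b := by rintro rfl; exact h.false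
  have hnlt : ¬ c b' < min (c b) A := fun h' => (h.trans h').not_ge (min_le_left _ _)
  simp [updLRU, hne, hnlt]

end updLRU

theorem updLRU_moveToFront {A n j i : ℕ} {a c : ℕ → ℕ} (hn : n ≤ A)
    (hdet : ∀ i < n, c (a i) = i) (hj : j < n) (hi : i < n) :
    updLRU A (a j) c (moveToFront a j i) = i := by
  have hcj : c (a j) = j := hdet j hj
  rcases Nat.eq_zero_or_pos i with rfl | hpos
  · simp [moveToFront]
  by_cases hij : i ≤ j
  · have hci : c (a (i - 1)) = i - 1 := hdet (i - 1) (by omega)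
    rw [moveToFront, if_neg hpos.ne', if_pos hij,
      updLRU_apply_of_lt (by omega) (by omega), hci]
    omega
  · have hci : c (a i) = i := hdet i hi
    rw [moveToFront, if_neg hpos.ne', if_neg hij, updLRU_apply_of_gt (by omega), hci]

theorem lru_deterministic_ages_preserved_general (A n : ℕ) (hn : n ≤ A)
    (C : Set (ℕ → ℕ)) (a : ℕ → ℕ)
    (hdet : ∀ c ∈ C, ∀ i, i < n → c (a i) = i) (j : ℕ) (hj : j < n) :
    ∀ c ∈ C, ∀ i, i < n →
      updLRU A (a j) c
        ((fun i => if i = 0 then a j else if i ≤ j then a (i - 1) else a i) i) = i :=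
  fun c hc _ hi => updLRU_moveToFront hn (hdet c hc) hj hi

/-- For an LRU cache, if a set `C` of cache states has `n` deterministic ages,
witnessed by blocks `a 0, …, a (n−1)` occupying ages `0, …, n−1` in every state
of `C`, then after accessing `a j` the updated set still has `n` deterministic
ages, witnessed by the reordered list `a j, a 0, …, a (j−1), a (j+1), …, a (n−1)`. -/
theorem lru_deterministic_ages_preserved (A n : ℕ) (hn : n ≤ A)
    (C : Set (ℕ → ℕ)) (hC : C.Nonempty) (a : ℕ → ℕ)
    (hdet : ∀ c ∈ C, ∀ i, i < n → c (a i) = i) (j : ℕ) (hj : j < n) :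
    ∀ c ∈ C, ∀ i, i < n →
      updLRU A (a j) c
        ((fun i => if i = 0 then a j else if i ≤ j then a (i - 1) else a i) i) = i :=
  lru_deterministic_ages_preserved_general A n hn C a hdet j hj
end

section
/- For an LRU cache, if b₀, ..., b_{n−1} are pairwise distinct blocks with n ≤ A, then after accessing them in order from any cache state c, the resulting state assigns age n−1−i to block bᵢ for every i < n. The same holds for FIFO provided each access bᵢ is a miss in the state reached just before it. -/
/-! Induct on the trace from its end. After a prefix `l` of distinct blocks has been accessed,
its blocks hold the ages `0, …, |l| - 1`; since distinct cached blocks have distinct ages, a block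
outside `l` is then at least `|l|` old. So accessing it (any LRU access, or a FIFO miss) ages every
block of `l` by one and gives it age `0`, which re-establishes the claim for the longer prefix. -/

def ageStep (m b : ℕ) (c : ℕ → ℕ) : ℕ → ℕ := fun b' =>
  if b' = b then 0 else if c b' < m then c b' + 1 else c b'

-- A block of age `m` keeps its age while the block of age `m - 1` is aged onto it, unless the
-- former is `b` itself, which moves to age `0`.
theorem cacheInv_ageStep {A m b : ℕ} {c : ℕ → ℕ} (hc : CacheInv A c) (hm : m ≤ A)
    (hb : m < A → c b = m) : CacheInv A (ageStep m b c) := by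
  obtain ⟨hle, hinj⟩ := hc
  refine ⟨fun x => ?_, fun x y hx hxy => ?_⟩
  · have := hle x
    unfold ageStep
    split_ifs <;> omega
  · unfold ageStep at hx hxy
    split_ifs at hx hxy <;> grind

theorem updLRU_eq_ageStep (A b : ℕ) (c : ℕ → ℕ) : updLRU A b c = ageStep (min (c b) A) b c :=
  rfl

theorem updFIFO_eq_ageStep_of_miss {A b : ℕ} {c : ℕ → ℕ} (hb : c b = A) :
    updFIFO A b c = ageStep A b c := by
  simp only [updFIFO, hb, lt_irrefl, if_false]
  rfl

theorem cacheInv_updLRU {A : ℕ} (b : ℕ) {c : ℕ → ℕ} (hc : CacheInv A c) :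
    CacheInv A (updLRU A b c) := by
  rw [updLRU_eq_ageStep]
  exact cacheInv_ageStep hc (min_le_right _ _) fun _ => by omega

theorem cacheInv_updFIFO {A : ℕ} (b : ℕ) {c : ℕ → ℕ} (hc : CacheInv A c) :
    CacheInv A (updFIFO A b c) := by
  by_cases hb : c b < A
  · simpa [updFIFO, hb] using hc
  · rw [updFIFO_eq_ageStep_of_miss (le_antisymm (hc.1 b) (not_lt.mp hb))]
    exact cacheInv_ageStep hc le_rfl (absurd · (lt_irrefl A))

theorem cacheInv_updTrace {A : ℕ} {upd : ℕ → (ℕ → ℕ) → (ℕ → ℕ)}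
    (hupd : ∀ b c, CacheInv A c → CacheInv A (upd b c)) (t : List ℕ) {c : ℕ → ℕ}
    (hc : CacheInv A c) : CacheInv A (updTrace upd t c) := by
  induction t generalizing c with
  | nil => exact hc
  | cons b t ih => exact ih (hupd b c hc)

@[simp]
theorem updTrace_concat (upd : ℕ → (ℕ → ℕ) → (ℕ → ℕ)) (t : List ℕ) (b : ℕ) (c : ℕ → ℕ) :
    updTrace upd (t ++ [b]) c = upd b (updTrace upd t c) := by
  induction t generalizing c with
  | nil => rfl
  | cons b' t ih => exact ih (upd b' c)

def MovesToFront (A : ℕ) (upd : ℕ → (ℕ → ℕ) → (ℕ → ℕ)) (b : ℕ) (c : ℕ → ℕ) : Prop :=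
  upd b c b = 0 ∧ ∀ b', b' ≠ b → c b' < min (c b) A → upd b c b' = c b' + 1

theorem movesToFront_updLRU (A b : ℕ) (c : ℕ → ℕ) : MovesToFront A (updLRU A) b c :=
  ⟨if_pos rfl, fun _ hne hlt => by simp [updLRU, hne, hlt]⟩

theorem movesToFront_updFIFO {A b : ℕ} {c : ℕ → ℕ} (hb : c b = A) :
    MovesToFront A (updFIFO A) b c := by
  rw [MovesToFront, updFIFO_eq_ageStep_of_miss hb, hb, min_self]
  exact ⟨if_pos rfl, fun _ hne hlt => by simp [ageStep, hne, hlt]⟩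

theorem length_le_of_not_mem {A : ℕ} {c : ℕ → ℕ} (hc : CacheInv A c) {l : List ℕ}
    (hl : l.length ≤ A) (hages : ∀ i (h : i < l.length), c l[i] = l.length - 1 - i) {b : ℕ}
    (hb : b ∉ l) : l.length ≤ c b := by
  by_contra! hlt
  have hj : c l[l.length - 1 - c b] = c b := by rw [hages]; omega
  have : b = l[l.length - 1 - c b] := hc.2 _ _ (by omega) hj.symm
  exact hb (this ▸ List.getElem_mem _)

theorem updTrace_ages {A : ℕ} {upd : ℕ → (ℕ → ℕ) → (ℕ → ℕ)}
    (hupd : ∀ b c, CacheInv A c → CacheInv A (upd b c)) {c : ℕ → ℕ} (hc : CacheInv A c)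
    {bs : List ℕ} (hnd : bs.Nodup) (hlen : bs.length ≤ A)
    (hfront : ∀ i (h : i < bs.length), MovesToFront A upd bs[i] (updTrace upd (bs.take i) c)) :
    ∀ i (h : i < bs.length), updTrace upd bs c bs[i] = bs.length - 1 - i := by
  induction bs using List.reverseRecOn with
  | nil => simp
  | append_singleton l b ih =>
    obtain ⟨hbl, hndl⟩ := (List.nodup_concat l b).mp (by simpa using hnd)
    simp only [List.length_append, List.length_singleton] at hlen ⊢
    have hages : ∀ i (h : i < l.length), updTrace upd l c l[i] = l.length - 1 - i := by
      refine ih hndl (by omega) fun i h => ?_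
      have := hfront i (by simp; omega)
      rwa [List.take_append_of_le_length h.le, List.getElem_append_left h] at this
    obtain ⟨hzero, hyounger⟩ : MovesToFront A upd b (updTrace upd l c) := by
      simpa using hfront l.length (by simp)
    have hb_old := length_le_of_not_mem (cacheInv_updTrace hupd l hc) (by omega) hages hbl
    intro i h
    rw [updTrace_concat]
    rcases Nat.lt_or_ge i l.length with hi | hi
    · have hne : l[i] ≠ b := fun he => hbl (he ▸ List.getElem_mem _)
      rw [List.getElem_append_left hi, hyounger _ hne (by rw [hages]; omega), hages]
      omega
    · obtain rfl : i = l.length := by omega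
      simpa using hzero

/-- For an LRU cache, accessing `n ≤ A` pairwise distinct blocks `bs` in order
from any cache state leaves block `bs i` at age `n−1−i`. The same holds for FIFO
provided each access is a miss in the state reached just before it. -/
theorem access_sequence_ages (A : ℕ) (bs : List ℕ) (c : ℕ → ℕ)
    (hinv : CacheInv A c) (hnd : bs.Nodup) (hlen : bs.length ≤ A) :
    (∀ i (h : i < bs.length),
      updTrace (updLRU A) bs c (bs.get ⟨i, h⟩) = bs.length - 1 - i) ∧
    ((∀ i (h : i < bs.length),
        updTrace (updFIFO A) (bs.take i) c (bs.get ⟨i, h⟩) = A) →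
      ∀ i (h : i < bs.length),
        updTrace (updFIFO A) bs c (bs.get ⟨i, h⟩) = bs.length - 1 - i) := by
  simp only [List.get_eq_getElem]
  exact ⟨updTrace_ages cacheInv_updLRU hinv hnd hlen fun _ _ => movesToFront_updLRU A _ _,
    fun hmiss => updTrace_ages cacheInv_updFIFO hinv hnd hlen fun i h =>
      movesToFront_updFIFO (hmiss i h)⟩
end
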